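/- Let G be a simple graph, v a vertex, and r ≥ 1 an integer, and assume that for every vertex c with c ≠ v and ¬G.Adj c v one has g_v(G) ≥ dist_G(c,v) + 1. Then for every length-r valid sequence (s_1,…,s_r) for v with graph sequence G_1 = G, G_{i+1} = G_i + (s_i,v), the local girth of v in the final graph satisfies g_v(G_{r+1}) = min_{1 ≤ i ≤ r} ( dist_{G_i}(s_i,v) + 1 ), and consequently g_v^{(r)}(G) = sup over all length-r valid sequences of min_{1 ≤ i ≤ r} ( dist_{G_i}(s_i,v) + 1 ). -/

import Mathlib

/-!
Adding the edge `{c, v}` (with `c ≠ v` non-adjacent) creates as new cycles through `v` exactly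
the cycles made of that edge and a `c`–`v` path of `G`, so
`g_v(G + (c, v)) = min (g_v(G), dist_G(c, v) + 1)`. Iterating along the graph sequence gives
`g_v(G_{r+1}) = min (g_v(G), min_i (dist_{G_i}(s_i, v) + 1))`, and the hypothesis applied to `s_1`
makes the first term redundant.
-/

open SimpleGraph

variable {V : Type*}

/-- `G + (c,v)`: the graph obtained from `G` by adding the edge `{c, v}`. -/
def addEdge (G : SimpleGraph V) (c v : V) : SimpleGraph V :=
  G ⊔ SimpleGraph.fromEdgeSet {s(c, v)}

/-- The local girth of a vertex `v`: the infimum (in `ℕ∞`) of the lengths of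
cycles of `G` passing through `v`. -/
noncomputable def localGirth (G : SimpleGraph V) (v : V) : ℕ∞ :=
  ⨅ (a : V) (w : G.Walk a a) (_ : w.IsCycle) (_ : v ∈ w.support), (w.length : ℕ∞)

/-- The edge local girth of `e`: the infimum (in `ℕ∞`) of the lengths of
cycles of `G` containing the edge `e`. -/
noncomputable def edgeLocalGirth (G : SimpleGraph V) (e : Sym2 V) : ℕ∞ :=
  ⨅ (a : V) (w : G.Walk a a) (_ : w.IsCycle) (_ : e ∈ w.edges), (w.length : ℕ∞)

/-- A length-`r` valid sequence for `v` in `G`: pairwise distinct vertices,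
each distinct from `v` and not adjacent to `v` in `G`. -/
def ValidSeq (G : SimpleGraph V) (v : V) {r : ℕ} (s : Fin r → V) : Prop :=
  Function.Injective s ∧ ∀ i, s i ≠ v ∧ ¬ G.Adj (s i) v

/-- The graph sequence of a sequence `s`: `graphSeq G v s 0 = G₁ = G` and
`graphSeq G v s i = G_{i+1} = G_i + (s_i, v)`. -/
def graphSeq (G : SimpleGraph V) (v : V) {r : ℕ} (s : Fin r → V) : ℕ → SimpleGraph V
  | 0 => G
  | i + 1 => if h : i < r then addEdge (graphSeq G v s i) (s ⟨i, h⟩) v else graphSeq G v s i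

/-- The `r`-edge local girth of `v` in `G`: the supremum, over all length-`r`
valid sequences `s` for `v`, of the local girth of `v` in the final graph. -/
noncomputable def multiEdgeLocalGirth (G : SimpleGraph V) (v : V) (r : ℕ) : ℕ∞ :=
  ⨆ (s : Fin r → V) (_ : ValidSeq G v s), localGirth (graphSeq G v s r) v

/-- The `r`-edge local girth of `c` with respect to `v`:
`g_v(G+(c,v))` if `r = 1`, and `g_v^{(r-1)}(G+(c,v))` if `r ≥ 2`. -/
noncomputable def cnMultiEdgeLocalGirth (G : SimpleGraph V) (c v : V) (r : ℕ) : ℕ∞ :=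
  if r = 1 then localGirth (addEdge G c v) v
  else multiEdgeLocalGirth (addEdge G c v) v (r - 1)

namespace SimpleGraph

variable {G : SimpleGraph V}

theorem Walk.IsTrail.exists_walk_notMem_edges_length_lt {u x y : V} {c : G.Walk u u}
    (hc : c.IsTrail) (he : s(x, y) ∈ c.edges) :
    ∃ p : G.Walk x y, s(x, y) ∉ p.edges ∧ p.length < c.length := by
  classical
  have hx := c.fst_mem_support_of_mem_edges he
  set c' := c.rotate x hx
  have he' : s(x, y) ∈ c'.edges := (c.rotate_edges x hx).mem_iff.mpr he
  have hy : y ∈ c'.support := c'.snd_mem_support_of_mem_edges he'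
  set p := c'.takeUntil y hy
  set q := c'.dropUntil y hy
  have hsplit : p.append q = c' := c'.take_spec hy
  have hnodup : (p.edges ++ q.edges).Nodup := by
    rw [← Walk.edges_append, hsplit]
    exact (hc.rotate hx).edges_nodup
  have hlen : p.length + q.length = c.length := by
    rw [← Walk.length_append, hsplit, Walk.length_rotate]
  rcases List.mem_append.mp (by rwa [← Walk.edges_append, hsplit]) with hp | hq
  · refine ⟨q.reverse, ?_, ?_⟩
    · rw [Walk.edges_reverse, List.mem_reverse]
      exact List.disjoint_of_nodup_append hnodup hp
    · have : 0 < p.length := by simpa using List.length_pos_of_mem hp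
      rw [Walk.length_reverse]
      omega
  · refine ⟨p, fun hp => List.disjoint_of_nodup_append hnodup hp hq, ?_⟩
    have : 0 < q.length := by simpa using List.length_pos_of_mem hq
    omega

theorem Walk.mem_edgeSet_of_notMem_edges_sup_edge {x y a b : V} {p : (G ⊔ edge x y).Walk a b}
    (hp : s(x, y) ∉ p.edges) {e : Sym2 V} (he : e ∈ p.edges) : e ∈ G.edgeSet := by
  have := p.edges_subset_edgeSet he
  rw [edgeSet_sup] at this
  rcases this with hG | hxy
  · exact hG
  · exact absurd (edgeSet_edge_subset hxy ▸ he) hp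

end SimpleGraph

section localGirth

variable {G H : SimpleGraph V} {c v : V}

lemma localGirth_le {a : V} {w : G.Walk a a} (hw : w.IsCycle) (hv : v ∈ w.support) :
    localGirth G v ≤ w.length :=
  iInf₂_le_of_le a w <| iInf₂_le hw hv

lemma le_localGirth {n : ℕ∞}
    (h : ∀ (a : V) (w : G.Walk a a), w.IsCycle → v ∈ w.support → n ≤ w.length) :
    n ≤ localGirth G v :=
  le_iInf₂ fun a w => le_iInf₂ (h a w)

lemma localGirth_anti (h : G ≤ H) : localGirth H v ≤ localGirth G v :=
  le_localGirth fun _ w hw hv => by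
    simpa using localGirth_le (hw.mapLe h) (by simpa using hv)

lemma localGirth_sup_edge_le (hcv : c ≠ v) (hadj : ¬ G.Adj c v) :
    localGirth (G ⊔ edge c v) v ≤ G.edist c v + 1 := by
  classical
  rcases eq_or_ne (G.edist c v) ⊤ with htop | htop
  · simp [htop]
  obtain ⟨p, hp⟩ := exists_walk_of_edist_ne_top htop
  have hvc : (G ⊔ edge c v).Adj v c := Or.inr <| (edge_adj ..).mpr ⟨Or.inr ⟨rfl, rfl⟩, hcv.symm⟩
  have hcycle : (Walk.cons hvc (p.bypass.mapLe le_sup_left)).IsCycle := by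
    refine Walk.cons_isCycle_iff _ _ |>.mpr ⟨p.bypass_isPath.mapLe le_sup_left, fun he => ?_⟩
    simp only [Walk.edges_mapLe_eq_edges, Sym2.eq_swap] at he
    exact hadj (p.bypass.adj_of_mem_edges he)
  calc localGirth (G ⊔ edge c v) v ≤ p.bypass.length + 1 := by
        simpa using localGirth_le hcycle (Walk.start_mem_support _)
    _ ≤ G.edist c v + 1 := by
        rw [← hp]
        gcongr
        exact p.length_bypass_le_length

lemma inf_edist_le_localGirth_sup_edge :
    localGirth G v ⊓ (G.edist c v + 1) ≤ localGirth (G ⊔ edge c v) v := by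
  refine le_localGirth fun a w hw hv => ?_
  by_cases he : s(c, v) ∈ w.edges
  · obtain ⟨p, hp, hlen⟩ := hw.isTrail.exists_walk_notMem_edges_length_lt he
    calc localGirth G v ⊓ (G.edist c v + 1) ≤ G.edist c v + 1 := inf_le_right
      _ ≤ p.length + 1 := by
        gcongr
        simpa using (p.transfer G fun _ => p.mem_edgeSet_of_notMem_edges_sup_edge hp).edist_le
      _ ≤ w.length := by exact_mod_cast hlen
  · have hG : ∀ e ∈ w.edges, e ∈ G.edgeSet := fun _ => w.mem_edgeSet_of_notMem_edges_sup_edge he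
    calc localGirth G v ⊓ (G.edist c v + 1) ≤ localGirth G v := inf_le_left
      _ ≤ w.length := by simpa using localGirth_le (hw.transfer hG) (by simpa using hv)

theorem localGirth_sup_edge (hcv : c ≠ v) (hadj : ¬ G.Adj c v) :
    localGirth (G ⊔ edge c v) v = localGirth G v ⊓ (G.edist c v + 1) :=
  le_antisymm (le_inf (localGirth_anti le_sup_left) (localGirth_sup_edge_le hcv hadj))
    inf_edist_le_localGirth_sup_edge

end localGirth

lemma iInf_fin_val_lt_succ {α : Type*} [CompleteLattice α] {r n : ℕ} (hn : n < r)
    (f : Fin r → α) :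
    ⨅ (i : Fin r) (_ : i.1 < n + 1), f i = (⨅ (i : Fin r) (_ : i.1 < n), f i) ⊓ f ⟨n, hn⟩ := by
  refine le_antisymm (le_inf ?_ (iInf₂_le (⟨n, hn⟩ : Fin r) n.lt_succ_self)) ?_
  · exact le_iInf₂ fun i hi => iInf₂_le i (Nat.lt_succ_of_lt hi)
  · refine le_iInf₂ fun i hi => ?_
    rcases Nat.lt_succ_iff_lt_or_eq.mp hi with hi | rfl
    · exact inf_le_of_left_le (iInf₂_le i hi)
    · exact inf_le_right

section graphSeq

variable {G : SimpleGraph V} {v : V} {r : ℕ} {s : Fin r → V}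

lemma graphSeq_succ (i : Fin r) : graphSeq G v s (i.1 + 1) = graphSeq G v s i.1 ⊔ edge (s i) v := by
  rw [graphSeq, dif_pos i.2]
  rfl

lemma not_adj_graphSeq (hs : ValidSeq G v s) (i : Fin r) {n : ℕ} (hn : n ≤ i.1) :
    ¬ (graphSeq G v s n).Adj (s i) v := by
  induction n with
  | zero => exact (hs.2 i).2
  | succ n ih =>
    have hnr : n < r := by omega
    rw [graphSeq_succ ⟨n, hnr⟩, sup_adj, edge_adj]
    rintro (h | ⟨⟨hsi, -⟩ | ⟨hsi, -⟩, -⟩)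
    · exact ih (by omega) h
    · exact absurd (congrArg Fin.val (hs.1 hsi)) (show i.1 ≠ n by omega)
    · exact (hs.2 i).1 hsi

lemma localGirth_graphSeq (hs : ValidSeq G v s) {n : ℕ} (hn : n ≤ r) :
    localGirth (graphSeq G v s n) v =
      localGirth G v ⊓ ⨅ (i : Fin r) (_ : i.1 < n), ((graphSeq G v s i.1).edist (s i) v + 1) := by
  induction n with
  | zero => simp [graphSeq]
  | succ n ih =>
    have hnr : n < r := by omega
    rw [graphSeq_succ ⟨n, hnr⟩, localGirth_sup_edge (hs.2 _).1 (not_adj_graphSeq hs _ le_rfl),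
      ih hnr.le, iInf_fin_val_lt_succ hnr, inf_assoc]

end graphSeq

/-- If for every `c ≠ v` not adjacent to `v` one has
`g_v(G) ≥ dist_G(c,v) + 1`, then for every length-`r` valid sequence `(s_1,…,s_r)` for
`v` (with `r ≥ 1`), `g_v(G_{r+1}) = min_{1 ≤ i ≤ r} (dist_{G_i}(s_i,v) + 1)`, and
consequently `g_v^{(r)}(G)` is the supremum of these quantities over valid sequences. -/
theorem stmt_12 (G : SimpleGraph V) (v : V) {r : ℕ} (hr : 1 ≤ r)
    (hg : ∀ c : V, c ≠ v → ¬ G.Adj c v → G.edist c v + 1 ≤ localGirth G v) :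
    (∀ s : Fin r → V, ValidSeq G v s →
      localGirth (graphSeq G v s r) v =
        ⨅ i : Fin r, ((graphSeq G v s i.1).edist (s i) v + 1)) ∧
    multiEdgeLocalGirth G v r =
      ⨆ (s : Fin r → V) (_ : ValidSeq G v s),
        ⨅ i : Fin r, ((graphSeq G v s i.1).edist (s i) v + 1) := by
  have hlocal : ∀ s : Fin r → V, ValidSeq G v s →
      localGirth (graphSeq G v s r) v =
        ⨅ i : Fin r, ((graphSeq G v s i.1).edist (s i) v + 1) := by
    intro s hs
    have hfirst : ⨅ i : Fin r, ((graphSeq G v s i.1).edist (s i) v + 1) ≤ localGirth G v :=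
      (iInf_le _ (⟨0, hr⟩ : Fin r)).trans (hg _ (hs.2 _).1 (hs.2 _).2)
    simpa only [Fin.is_lt, iInf_pos, inf_eq_right.mpr hfirst] using localGirth_graphSeq hs le_rfl
  exact ⟨hlocal, iSup_congr fun s => iSup_congr (hlocal s)⟩
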